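/- arXiv:0812.1300 — 2 statements merged into one kernel-verified Lean document; each statement's English description precedes it below -/
import Mathlib

section
/- Let n > 1, N = dn, and let A₁, …, A_{d-1} be real d×d matrices such that each Aᵢ is skew-symmetric, AᵢᵀAᵢ = I_d, and AᵢᵀAⱼ + AⱼᵀAᵢ = 0 for i ≠ j; set A₀ = I_d. For λ ∈ ℝ^d with Σλᵢ² = 1 let 𝒢_λ be the N×N block-diagonal matrix with n equal diagonal blocks Σ_{i=0}^{d-1} λᵢAᵢ, and let 𝒜ᵢ be the N×N block-diagonal matrix with n equal diagonal blocks Aᵢ. If f : S^{N-1} → ℝ satisfies f(𝒢_λ θ) = f(θ) for every such λ and every θ ∈ S^{N-1}, then for every θ ∈ S^{N-1}, f is constant on S^{N-1} ∩ span{θ, 𝒜₁θ, …, 𝒜_{d-1}θ}; that is, f(η) = f(θ) for every unit vector η in that span. -/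
/-!
Writing `G = a • 1 + ∑ i, c i • Bᵢ`, the relations on the `Bᵢ` are exactly what makes
`Gᵀ G = (a² + ∑ cᵢ²) • 1`: the cross terms `a cᵢ (Bᵢᵀ + Bᵢ)` vanish by skew-symmetry and the
terms `cᵢ cⱼ Bᵢᵀ Bⱼ` cancel in pairs. The same holds for the block-diagonal matrix `𝒢` with blocks
`G`. A vector `η` of the span is `𝒢 θ` for some such `a, c`, so `‖η‖² = (a² + ∑ cᵢ²) ‖θ‖²`, and
`‖η‖ = ‖θ‖ = 1` forces `(a, c)` onto the unit sphere; the invariance of `f` then gives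
`f η = f (𝒢 θ) = f θ`.
-/

open Matrix

theorem Finset.sum_sum_mul_smul_of_add_eq_zero {R M ι : Type*} [CommRing R] [AddCommGroup M]
    [Module R M] (s : Finset ι) (c : ι → R) (X : ι → ι → M) (x : M)
    (hdiag : ∀ i, X i i = x) (hoff : ∀ i j, i ≠ j → X i j + X j i = 0) :
    ∑ i ∈ s, ∑ j ∈ s, (c i * c j) • X i j = (∑ i ∈ s, c i ^ 2) • x := by
  classical
  induction s using Finset.induction with
  | empty => simp
  | insert a s has ih =>
    have hcross : ∑ j ∈ s, ((c a * c j) • X a j + (c j * c a) • X j a) = 0 :=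
      Finset.sum_eq_zero fun j hj => by
        rw [mul_comm (c j), ← smul_add, hoff a j (ne_of_mem_of_not_mem hj has).symm, smul_zero]
    simp only [Finset.sum_insert has, Finset.sum_add_distrib, hdiag, add_smul, ← ih]
    rw [Finset.sum_add_distrib] at hcross
    rw [sq]
    linear_combination (norm := module) hcross

namespace Matrix

section

variable {R m ι : Type*} [CommRing R] [Fintype m] [DecidableEq m] [Fintype ι]

theorem transpose_mul_self_smul_one_add_sum (B : ι → Matrix m m R)
    (hskew : ∀ i, (B i)ᵀ = -B i) (horth : ∀ i, (B i)ᵀ * B i = 1)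
    (hanti : ∀ i j, i ≠ j → (B i)ᵀ * B j + (B j)ᵀ * B i = 0) (a : R) (c : ι → R) :
    (a • 1 + ∑ i, c i • B i)ᵀ * (a • 1 + ∑ i, c i • B i) = (a ^ 2 + ∑ i, c i ^ 2) • 1 := by
  have hpairs : ∑ i, ∑ j, (c i * c j) • ((B i)ᵀ * B j) = (∑ i, c i ^ 2) • (1 : Matrix m m R) :=
    Finset.sum_sum_mul_smul_of_add_eq_zero _ c _ 1 horth hanti
  have hcross : ∑ i, (a * c i) • ((B i)ᵀ + B i) = 0 := by simp [hskew]
  simp only [transpose_add, transpose_smul, transpose_one, transpose_sum]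
  rw [add_mul, mul_add, mul_add, Finset.sum_mul_sum]
  simp only [smul_mul_smul_comm, one_mul, mul_one, Finset.mul_sum, Finset.sum_mul, smul_add,
    Finset.sum_add_distrib] at hcross ⊢
  simp_rw [hpairs, mul_comm (c _) a]
  linear_combination (norm := module) hcross

theorem dotProduct_mulVec_self_of_transpose_mul_self {A : Matrix m m R} {s : R}
    (hA : Aᵀ * A = s • 1) (x : m → R) : (A *ᵥ x) ⬝ᵥ (A *ᵥ x) = s * (x ⬝ᵥ x) := by
  rw [dotProduct_mulVec, ← vecMul_transpose, vecMul_vecMul, ← dotProduct_mulVec, hA, smul_mulVec,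
    one_mulVec, dotProduct_smul, smul_eq_mul]

theorem exists_eq_mulVec_of_mem_span_insert_range {M : ι → Matrix m m R} {θ η : m → R}
    (h : η ∈ Submodule.span R (insert θ (Set.range fun i => M i *ᵥ θ))) :
    ∃ (a : R) (c : ι → R), η = (a • 1 + ∑ i, c i • M i) *ᵥ θ := by
  obtain ⟨a, z, hz, rfl⟩ := Submodule.mem_span_insert.1 h
  obtain ⟨c, rfl⟩ := (Submodule.mem_span_range_iff_exists_fun R).1 hz
  exact ⟨a, c, by simp [add_mulVec, sum_mulVec, smul_mulVec]⟩

end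

section

variable {R m o : Type*} [CommRing R] [DecidableEq m] [DecidableEq o]

theorem blockDiagonal_const_smul_one_add_sum {ι : Type*} [Fintype ι] (B : ι → Matrix m m R)
    (a : R) (c : ι → R) :
    blockDiagonal (fun _ : o => a • 1 + ∑ i, c i • B i)
      = a • 1 + ∑ i, c i • blockDiagonal (fun _ : o => B i) := by
  ext ⟨i, k⟩ ⟨j, l⟩
  simp only [blockDiagonal_apply, add_apply, smul_apply, one_apply, sum_apply]
  by_cases hkl : k = l <;> by_cases hij : i = j <;> simp [hkl, hij]

theorem blockDiagonal_const_transpose_mul_self [Fintype m] [Fintype o] {G : Matrix m m R}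
    {s : R} (hG : Gᵀ * G = s • 1) :
    (blockDiagonal fun _ : o => G)ᵀ * blockDiagonal (fun _ : o => G) = s • 1 := by
  rw [blockDiagonal_transpose, ← blockDiagonal_mul]
  simp only [hG]
  exact (blockDiagonal_smul s 1).trans (congrArg _ blockDiagonal_one)

end

end Matrix

theorem invariant_function_constant_on_orbit_span_general (d n : ℕ)
    (B : Fin (d - 1) → Matrix (Fin d) (Fin d) ℝ)
    (hskew : ∀ i, (B i)ᵀ = -B i)
    (horth : ∀ i, (B i)ᵀ * B i = 1)
    (hanti : ∀ i j, i ≠ j → (B i)ᵀ * B j + (B j)ᵀ * B i = 0)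
    (f : (Fin d × Fin n → ℝ) → ℝ)
    (hf : ∀ (lam₀ : ℝ) (lam : Fin (d - 1) → ℝ), lam₀ ^ 2 + ∑ i, lam i ^ 2 = 1 →
      ∀ θ : Fin d × Fin n → ℝ, θ ⬝ᵥ θ = 1 →
        f ((Matrix.blockDiagonal fun _ : Fin n =>
          lam₀ • (1 : Matrix (Fin d) (Fin d) ℝ) + ∑ i, lam i • B i).mulVec θ) = f θ)
    (θ : Fin d × Fin n → ℝ) (hθ : θ ⬝ᵥ θ = 1)
    (η : Fin d × Fin n → ℝ) (hη : η ⬝ᵥ η = 1)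
    (hmem : η ∈ Submodule.span ℝ (insert θ (Set.range fun i : Fin (d - 1) =>
      (Matrix.blockDiagonal fun _ : Fin n => B i).mulVec θ))) :
    f η = f θ := by
  obtain ⟨a, c, rfl⟩ := exists_eq_mulVec_of_mem_span_insert_range hmem
  rw [← blockDiagonal_const_smul_one_add_sum] at hη ⊢
  have hnorm : a ^ 2 + ∑ i, c i ^ 2 = 1 := by
    have hG := blockDiagonal_const_transpose_mul_self (o := Fin n)
      (transpose_mul_self_smul_one_add_sum B hskew horth hanti a c)
    rwa [dotProduct_mulVec_self_of_transpose_mul_self hG, hθ, mul_one] at hη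
  exact hf a c hnorm θ hθ

/-- Let `N = dn`, `n > 1`, and let `A₁, …, A_{d-1}` encode an orthonormal system of linear
tangent vector fields on `S^{d-1}` (skew-symmetric, `AᵢᵀAᵢ = I`, `AᵢᵀAⱼ + AⱼᵀAᵢ = 0`).
If `f` on `S^{N-1}` is invariant under all block-diagonal matrices `𝒢_λ` with `n` equal
blocks `Σ λᵢ Aᵢ`, `λ ∈ S^{d-1}`, then `f` is constant on
`S^{N-1} ∩ span {θ, 𝒜₁θ, …, 𝒜_{d-1}θ}` for every `θ ∈ S^{N-1}`. -/
theorem invariant_function_constant_on_orbit_span (d n : ℕ) (hn : 1 < n)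
    (B : Fin (d - 1) → Matrix (Fin d) (Fin d) ℝ)
    (hskew : ∀ i, (B i)ᵀ = -B i)
    (horth : ∀ i, (B i)ᵀ * B i = 1)
    (hanti : ∀ i j, i ≠ j → (B i)ᵀ * B j + (B j)ᵀ * B i = 0)
    (f : (Fin d × Fin n → ℝ) → ℝ)
    (hf : ∀ (lam₀ : ℝ) (lam : Fin (d - 1) → ℝ), lam₀ ^ 2 + ∑ i, lam i ^ 2 = 1 →
      ∀ θ : Fin d × Fin n → ℝ, θ ⬝ᵥ θ = 1 →
        f ((Matrix.blockDiagonal fun _ : Fin n =>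
          lam₀ • (1 : Matrix (Fin d) (Fin d) ℝ) + ∑ i, lam i • B i).mulVec θ) = f θ)
    (θ : Fin d × Fin n → ℝ) (hθ : θ ⬝ᵥ θ = 1)
    (η : Fin d × Fin n → ℝ) (hη : η ⬝ᵥ η = 1)
    (hmem : η ∈ Submodule.span ℝ (insert θ (Set.range fun i : Fin (d - 1) =>
      (Matrix.blockDiagonal fun _ : Fin n => B i).mulVec θ))) :
    f η = f θ :=
  invariant_function_constant_on_orbit_span_general d n B hskew horth hanti f hf θ hθ η hη hmem
end

section
/- Let K and L be equilibrated convex bodies in ℍ², the left quaternionic vector space of pairs of quaternions identified with ℝ⁸. If vol₄(K ∩ y^⊥) ≤ vol₄(L ∩ y^⊥) for every y ∈ ℍ² with ‖y‖₂ = 1, where y^⊥ = {x ∈ ℍ² : x₁·conj(y₁) + x₂·conj(y₂) = 0} is the quaternionic hyperplane orthogonal to y (a real 4-dimensional subspace), then vol₈(K) ≤ vol₈(L). (The quaternionic Busemann–Petty problem has an affirmative answer for n = 2.) -/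
/-!
For `n = 2` the quaternionic hyperplane `y^⊥` is itself a quaternionic line `ℍ • u` (rank–nullity
over the division ring `ℍ`), and every nonzero `x` lies on such a line. As `q ↦ q • u` is an
isometry for `‖u‖ = 1` and `K`, `L` are compact and equilibrated, `K ∩ ℍ • u` and `L ∩ ℍ • u` are
the images of closed balls of `ℍ ≅ ℝ⁴` centred at `0`; comparing their 4-dimensional volumes
compares the radii, so `K \ {0} ⊆ L`. Points are `vol₈`-null, hence `vol₈ K ≤ vol₈ L`.
-/

open MeasureTheory Quaternion Metric Set Module

local notation "ℍ²" => PiLp 2 (fun _ : Fin 2 => ℍ[ℝ])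

theorem IsCompact.exists_eq_closedBall_of_mul_mem {𝕜 : Type*} [NormedDivisionRing 𝕜] {S : Set 𝕜}
    (hS : IsCompact S) (hmul : ∀ p ∈ S, ∀ q : 𝕜, ‖q‖ ≤ 1 → q * p ∈ S) :
    ∃ R : ℝ, S = closedBall 0 R := by
  rcases S.eq_empty_or_nonempty with rfl | hne
  · exact ⟨-1, (closedBall_eq_empty.mpr (by norm_num)).symm⟩
  obtain ⟨p, hp, hmax⟩ := hS.exists_isMaxOn hne continuous_norm.continuousOn
  refine ⟨‖p‖, Set.ext fun w => ⟨fun hw => by simpa using hmax hw, fun hw => ?_⟩⟩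
  rw [mem_closedBall_zero_iff] at hw
  have hq : ‖w * p⁻¹‖ ≤ 1 := by
    rw [norm_mul, norm_inv]
    exact mul_inv_le_one_of_le₀ hw (norm_nonneg p)
  have hwp : w * p⁻¹ * p = w := by
    rcases eq_or_ne p 0 with rfl | hp0
    · simp only [norm_zero, norm_le_zero_iff] at hw
      simp [hw]
    · exact inv_mul_cancel_right₀ hp0 w
  simpa [hwp] using hmul p hp _ hq

section SmulRight

variable {𝕜 E : Type*} [NormedDivisionRing 𝕜] [NormedAddCommGroup E] [Module 𝕜 E]
  [NormSMulClass 𝕜 E] {u : E}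

theorem isometry_smul_right_of_norm_eq_one (hu : ‖u‖ = 1) : Isometry fun q : 𝕜 => q • u :=
  AddMonoidHomClass.isometry_of_norm (smulAddHom 𝕜 E |>.flip u) fun q => by
    simp [norm_smul, hu]

theorem exists_preimage_smul_right_eq_closedBall [CompleteSpace 𝕜] (hu : ‖u‖ = 1) {S : Set E}
    (hS : IsCompact S) (hsmul : ∀ x ∈ S, ∀ q : 𝕜, ‖q‖ ≤ 1 → q • x ∈ S) :
    ∃ R : ℝ, (fun q : 𝕜 => q • u) ⁻¹' S = closedBall 0 R :=
  ((isometry_smul_right_of_norm_eq_one hu).isClosedEmbedding.isCompact_preimage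
    hS).exists_eq_closedBall_of_mul_mem
    fun p hp q hq => by simpa [mul_smul] using hsmul _ hp q hq

theorem hausdorffMeasure_inter_range_smul_right [MeasurableSpace 𝕜] [BorelSpace 𝕜]
    [MeasurableSpace E] [BorelSpace E] (hu : ‖u‖ = 1) {d : ℝ} (hd : 0 ≤ d) (S : Set E) :
    μH[d] (S ∩ range fun q : 𝕜 => q • u) = μH[d] ((fun q : 𝕜 => q • u) ⁻¹' S) := by
  rw [← image_preimage_eq_inter_range,
    (isometry_smul_right_of_norm_eq_one hu).hausdorffMeasure_image (Or.inl hd)]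

end SmulRight

theorem MeasureTheory.Measure.addHaar_closedBall_lt_addHaar_closedBall {E : Type*}
    [NormedAddCommGroup E] [NormedSpace ℝ E] [MeasurableSpace E] [BorelSpace E]
    [FiniteDimensional ℝ E] [Nontrivial E]
    (μ : Measure E) [μ.IsAddHaarMeasure] (x : E) {r R : ℝ} (hR : 0 < R) (hrR : r < R) :
    μ (closedBall x r) < μ (closedBall x R) := by
  rcases lt_or_ge r 0 with hr | hr
  · rw [closedBall_eq_empty.mpr hr, measure_empty]
    exact measure_closedBall_pos μ x hR
  rw [Measure.addHaar_closedBall μ x hr, Measure.addHaar_closedBall μ x hR.le]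
  refine ENNReal.mul_lt_mul_left (measure_ball_pos μ 0 one_pos).ne' measure_ball_lt_top.ne ?_
  exact (ENNReal.ofReal_lt_ofReal_iff (by positivity)).mpr
    (pow_lt_pow_left₀ hrR hr finrank_pos.ne')

theorem smul_mem_of_hausdorffMeasure_inter_range_le {E : Type*} [NormedAddCommGroup E]
    [Module ℍ[ℝ] E] [NormSMulClass ℍ[ℝ] E] [MeasurableSpace E] [BorelSpace E] {K L : Set E}
    (hKcomp : IsCompact K) (hKequi : ∀ x ∈ K, ∀ q : ℍ[ℝ], ‖q‖ ≤ 1 → q • x ∈ K)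
    (hLcomp : IsCompact L) (hLequi : ∀ x ∈ L, ∀ q : ℍ[ℝ], ‖q‖ ≤ 1 → q • x ∈ L)
    {u : E} (hu : ‖u‖ = 1)
    (hsec : μH[4] (K ∩ range fun q : ℍ[ℝ] => q • u) ≤ μH[4] (L ∩ range fun q : ℍ[ℝ] => q • u))
    {q : ℍ[ℝ]} (hq : q ≠ 0) (hqK : q • u ∈ K) : q • u ∈ L := by
  let : MeasurableSpace ℍ[ℝ] := borel _
  have : BorelSpace ℍ[ℝ] := ⟨rfl⟩
  have : (μH[4] : Measure ℍ[ℝ]).IsAddHaarMeasure := by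
    have h4 : ((finrank ℝ ℍ[ℝ] : ℕ) : ℝ) = 4 := by simp [finrank_eq_four]
    rw [← h4]; infer_instance
  obtain ⟨RK, hRK⟩ := exists_preimage_smul_right_eq_closedBall hu hKcomp hKequi
  obtain ⟨RL, hRL⟩ := exists_preimage_smul_right_eq_closedBall hu hLcomp hLequi
  have hqRK : ‖q‖ ≤ RK := by
    simpa [hRK] using (show q ∈ (fun q : ℍ[ℝ] => q • u) ⁻¹' K from hqK)
  have hRKL : RK ≤ RL := by
    rw [hausdorffMeasure_inter_range_smul_right hu (by norm_num),
      hausdorffMeasure_inter_range_smul_right hu (by norm_num), hRK, hRL] at hsec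
    exact le_of_not_gt fun h => (Measure.addHaar_closedBall_lt_addHaar_closedBall _ 0
      ((norm_pos_iff.mpr hq).trans_le hqRK) h).not_ge hsec
  change q ∈ (fun q : ℍ[ℝ] => q • u) ⁻¹' L
  rw [hRL, mem_closedBall_zero_iff]
  exact hqRK.trans hRKL

namespace QuaternionicPlane

/-- `z ↦ ⟨z, y⟩ = z₁ ȳ₁ + z₂ ȳ₂`; it is left `ℍ`-linear, so its kernel `y^⊥` is an `ℍ`-submodule. -/
noncomputable def orthFunctional (y : ℍ²) : ℍ² →ₗ[ℍ[ℝ]] ℍ[ℝ] where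
  toFun z := z 0 * star (y 0) + z 1 * star (y 1)
  map_add' z w := by simp only [PiLp.add_apply]; noncomm_ring
  map_smul' q z := by simp only [PiLp.smul_apply, smul_eq_mul, RingHom.id_apply]; noncomm_ring

theorem orthFunctional_apply (y z : ℍ²) :
    orthFunctional y z = z 0 * star (y 0) + z 1 * star (y 1) := rfl

theorem orthFunctional_self (y : ℍ²) : orthFunctional y y = ((‖y‖ ^ 2 : ℝ) : ℍ[ℝ]) := by
  rw [orthFunctional_apply, self_mul_star, self_mul_star, PiLp.norm_sq_eq_of_L2,
    Fin.sum_univ_two, normSq_eq_norm_mul_self, normSq_eq_norm_mul_self]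
  push_cast [sq]; rfl

theorem orthFunctional_real_smul (c : ℝ) (y z : ℍ²) :
    orthFunctional (c • y) z = c • orthFunctional y z := by
  simp only [orthFunctional_apply, PiLp.smul_apply, Quaternion.star_smul, mul_smul_comm, smul_add]

theorem exists_norm_eq_one_orthFunctional_eq_zero (x : ℍ²) :
    ∃ y : ℍ², ‖y‖ = 1 ∧ orthFunctional y x = 0 := by
  suffices ∃ y : ℍ², y ≠ 0 ∧ orthFunctional y x = 0 by
    obtain ⟨y, hy, hyx⟩ := this
    exact ⟨(‖y‖⁻¹ : ℝ) • y, norm_smul_inv_norm hy, by rw [orthFunctional_real_smul, hyx, smul_zero]⟩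
  by_cases hx : x 0 = 0
  · refine ⟨WithLp.toLp 2 ![1, 0], fun h => ?_, by simp [orthFunctional_apply, hx]⟩
    simpa using congrArg (· 0) h
  · refine ⟨WithLp.toLp 2 ![star (-((x 0)⁻¹ * x 1)), 1], fun h => ?_, ?_⟩
    · simpa using congrArg (· 1) h
    · simp [orthFunctional_apply, hx]

theorem ker_orthFunctional_eq_span {x y : ℍ²} (hx : x ≠ 0) (hy : y ≠ 0)
    (hxy : orthFunctional y x = 0) :
    LinearMap.ker (orthFunctional y) = ℍ[ℝ] ∙ x := by
  have hrange : finrank ℍ[ℝ] (LinearMap.range (orthFunctional y)) ≠ 0 := by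
    rw [Ne, Submodule.finrank_eq_zero, LinearMap.range_eq_bot]
    intro h
    have : ((‖y‖ ^ 2 : ℝ) : ℍ[ℝ]) = ((0 : ℝ) : ℍ[ℝ]) := by
      rw [← orthFunctional_self, h, LinearMap.zero_apply, coe_zero]
    exact hy (by simpa using coe_injective this)
  have hdim : finrank ℍ[ℝ] ℍ² = 2 :=
    (WithLp.linearEquiv 2 ℍ[ℝ] (Fin 2 → ℍ[ℝ])).finrank_eq.trans (finrank_fin_fun ℍ[ℝ])
  have := LinearMap.finrank_range_add_finrank_ker (orthFunctional y)
  refine (Submodule.eq_of_le_of_finrank_le ?_ ?_).symm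
  · exact (Submodule.span_singleton_le_iff_mem _ _).mpr hxy
  · rw [finrank_span_singleton hx]; omega

theorem setOf_orthFunctional_eq_range_smul {x y : ℍ²} (hx : x ≠ 0) (hy : y ≠ 0)
    (hxy : orthFunctional y x = 0) :
    {z | orthFunctional y z = 0} = range fun q : ℍ[ℝ] => q • x := by
  ext z
  simp only [← LinearMap.mem_ker, ker_orthFunctional_eq_span hx hy hxy,
    Submodule.mem_span_singleton, mem_range]
  rfl

theorem mem_of_hausdorffMeasure_sections_le [MeasurableSpace ℍ²] [BorelSpace ℍ²] {K L : Set ℍ²}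
    (hKcomp : IsCompact K) (hKequi : ∀ x ∈ K, ∀ q : ℍ[ℝ], ‖q‖ ≤ 1 → q • x ∈ K)
    (hLcomp : IsCompact L) (hLequi : ∀ x ∈ L, ∀ q : ℍ[ℝ], ‖q‖ ≤ 1 → q • x ∈ L)
    (hsec : ∀ y : ℍ², ‖y‖ = 1 →
      μH[4] (K ∩ {z | orthFunctional y z = 0}) ≤ μH[4] (L ∩ {z | orthFunctional y z = 0}))
    {x : ℍ²} (hxK : x ∈ K) (hx : x ≠ 0) : x ∈ L := by
  set u : ℍ² := (‖x‖⁻¹ : ℝ) • x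
  have hu : ‖u‖ = 1 := norm_smul_inv_norm hx
  have hxu : ((‖x‖ : ℝ) : ℍ[ℝ]) • u = x := by
    rw [← Quaternion.algebraMap_def, algebraMap_smul, smul_inv_smul₀ (norm_ne_zero_iff.mpr hx)]
  obtain ⟨y, hy, hyu⟩ := exists_norm_eq_one_orthFunctional_eq_zero u
  have hline := setOf_orthFunctional_eq_range_smul (norm_ne_zero_iff.mp (hu ▸ one_ne_zero))
    (norm_ne_zero_iff.mp (hy ▸ one_ne_zero)) hyu
  rw [← hxu] at hxK ⊢
  exact smul_mem_of_hausdorffMeasure_inter_range_le hKcomp hKequi hLcomp hLequi hu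
    (hline ▸ hsec y hy) (coe_injective.ne (norm_ne_zero_iff.mpr hx)) hxK

end QuaternionicPlane

open QuaternionicPlane in
theorem busemann_petty_quaternionic_affirmative_general
    [MeasurableSpace (PiLp 2 (fun _ : Fin 2 => ℍ[ℝ]))]
    [BorelSpace (PiLp 2 (fun _ : Fin 2 => ℍ[ℝ]))]
    (K L : Set (PiLp 2 (fun _ : Fin 2 => ℍ[ℝ])))
    (hKcomp : IsCompact K)
    (hKequi : ∀ x ∈ K, ∀ q : ℍ[ℝ], ‖q‖ ≤ 1 →
      (WithLp.toLp 2 (fun j => q * x j) : PiLp 2 (fun _ : Fin 2 => ℍ[ℝ])) ∈ K)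
    (hLcomp : IsCompact L)
    (hLequi : ∀ x ∈ L, ∀ q : ℍ[ℝ], ‖q‖ ≤ 1 →
      (WithLp.toLp 2 (fun j => q * x j) : PiLp 2 (fun _ : Fin 2 => ℍ[ℝ])) ∈ L)
    (hsec : ∀ y : PiLp 2 (fun _ : Fin 2 => ℍ[ℝ]), ‖y‖ = 1 →
      μH[(4 : ℝ)]
          (K ∩ {x : PiLp 2 (fun _ : Fin 2 => ℍ[ℝ]) |
            x 0 * star (y 0) + x 1 * star (y 1) = 0}) ≤
        μH[(4 : ℝ)]
          (L ∩ {x : PiLp 2 (fun _ : Fin 2 => ℍ[ℝ]) |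
            x 0 * star (y 0) + x 1 * star (y 1) = 0})) :
    μH[(8 : ℝ)] K ≤ μH[(8 : ℝ)] L := by
  have := Measure.nullSingletonClass_hausdorff (X := ℍ²) (d := 8) (by norm_num)
  have hKL : K \ {0} ⊆ L := fun x hx =>
    mem_of_hausdorffMeasure_sections_le hKcomp hKequi hLcomp hLequi hsec hx.1 hx.2
  calc μH[(8 : ℝ)] K = μH[(8 : ℝ)] (K \ {0}) := (measure_sdiff_null (measure_singleton 0)).symm
    _ ≤ μH[(8 : ℝ)] L := measure_mono hKL

/-- The quaternionic Busemann–Petty problem has an affirmative answer for `n = 2`: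
equilibrated convex bodies in `ℍ² ≅ ℝ⁸` with smaller quaternionic hyperplane sections
have smaller volume. -/
theorem busemann_petty_quaternionic_affirmative
    [MeasurableSpace (PiLp 2 (fun _ : Fin 2 => ℍ[ℝ]))]
    [BorelSpace (PiLp 2 (fun _ : Fin 2 => ℍ[ℝ]))]
    (K L : Set (PiLp 2 (fun _ : Fin 2 => ℍ[ℝ])))
    (hKcomp : IsCompact K) (hKconv : Convex ℝ K) (hKint : (interior K).Nonempty)
    (hKequi : ∀ x ∈ K, ∀ q : ℍ[ℝ], ‖q‖ ≤ 1 →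
      (WithLp.toLp 2 (fun j => q * x j) : PiLp 2 (fun _ : Fin 2 => ℍ[ℝ])) ∈ K)
    (hLcomp : IsCompact L) (hLconv : Convex ℝ L) (hLint : (interior L).Nonempty)
    (hLequi : ∀ x ∈ L, ∀ q : ℍ[ℝ], ‖q‖ ≤ 1 →
      (WithLp.toLp 2 (fun j => q * x j) : PiLp 2 (fun _ : Fin 2 => ℍ[ℝ])) ∈ L)
    (hsec : ∀ y : PiLp 2 (fun _ : Fin 2 => ℍ[ℝ]), ‖y‖ = 1 →
      μH[(4 : ℝ)]
          (K ∩ {x : PiLp 2 (fun _ : Fin 2 => ℍ[ℝ]) |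
            x 0 * star (y 0) + x 1 * star (y 1) = 0}) ≤
        μH[(4 : ℝ)]
          (L ∩ {x : PiLp 2 (fun _ : Fin 2 => ℍ[ℝ]) |
            x 0 * star (y 0) + x 1 * star (y 1) = 0})) :
    μH[(8 : ℝ)] K ≤ μH[(8 : ℝ)] L :=
  busemann_petty_quaternionic_affirmative_general K L hKcomp hKequi hLcomp hLequi hsec
end
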